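/- Let T > 0 and let (Z_k)_{k≥1} be a sequence of independent real random variables in L² on a probability space, each with mean 0 and variance 1. For t ∈ [0, T], define the partial sums W_t^{(N)} = √(2T)·Σ_{k=1}^{N} Z_k·sin((k − 1/2)πt/T)/((k − 1/2)π). Then for each t ∈ [0, T] the sequence (W_t^{(N)})_N converges in L² to a limit W_t, and for all s, t ∈ [0, T] one has E[W_s·W_t] = min(s, t). -/

import Mathlib

open MeasureTheory Filter Topology
open Real

lemma bern2 : (bernoulli 2 : ℚ) = 1/6 := by
  rw [bernoulli_eq_bernoulli'_of_ne_one (by norm_num), bernoulli'_two]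

lemma hasSum_cos_sq {x : ℝ} (hx : x ∈ Set.Icc (0:ℝ) 1) :
    HasSum (fun n : ℕ => 1 / (n : ℝ) ^ 2 * Real.cos (2 * π * n * x))
      (π ^ 2 * (x ^ 2 - x + 1 / 6)) := by
  have h := hasSum_one_div_nat_pow_mul_cos (k := 1) one_ne_zero hx
  have hb : (Polynomial.map (algebraMap ℚ ℝ) (Polynomial.bernoulli (2*1))).eval x
      = x ^ 2 - x + 1 / 6 := by
    simp [Polynomial.bernoulli, Finset.sum_range_succ, bernoulli_zero, bernoulli_one, bern2]
    ring
  rw [hb] at h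
  convert h using 2
  norm_num [Nat.factorial]
  ring


lemma hasSum_odd_cos {θ : ℝ} (h0 : 0 ≤ θ) (h1 : θ ≤ π) :
    HasSum (fun k : ℕ => Real.cos ((2 * (k:ℝ) + 1) * θ) / (2 * (k:ℝ) + 1) ^ 2)
      (π ^ 2 / 8 - π * θ / 4) := by
  have hπ := Real.pi_pos
  set x : ℝ := θ / (2 * π) with hx
  have hx0 : 0 ≤ x := by positivity
  have hx1 : x ≤ 1 / 2 := by
    rw [hx, div_le_div_iff₀ (by positivity) (by norm_num)]
    nlinarith
  set f : ℕ → ℝ := fun n => 1 / (n : ℝ) ^ 2 * Real.cos (n * θ) with hf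
  -- full sum
  have hfull : HasSum f (θ ^ 2 / 4 - π * θ / 2 + π ^ 2 / 6) := by
    have h := hasSum_cos_sq (x := x) ⟨hx0, by linarith⟩
    have e1 : ∀ n : ℕ, 2 * π * n * x = n * θ := by
      intro n; rw [hx]; field_simp
    simp_rw [e1] at h
    convert h using 1
    rw [hx]; field_simp; ring
  -- even part
  have heven : HasSum (fun k : ℕ => f (2 * k))
      (θ ^ 2 / 4 - π * θ / 4 + π ^ 2 / 24) := by
    have h := hasSum_cos_sq (x := 2 * x) ⟨by positivity, by linarith⟩
    have h4 := h.div_const 4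
    have e1 : ∀ n : ℕ, 1 / (n : ℝ) ^ 2 * Real.cos (2 * π * n * (2 * x)) / 4 = f (2 * n) := by
      intro n
      have h2 : 2 * π * (n:ℝ) * (2 * x) = ((2 * n : ℕ) : ℝ) * θ := by
        push_cast; rw [hx]; field_simp
      rw [h2, hf]; push_cast; ring
    simp_rw [e1] at h4
    convert h4 using 1
    · rfl
    rw [hx]; field_simp; ring
  -- odd part by subtraction
  have hoddsummable : Summable (fun k : ℕ => f (2 * k + 1)) :=
    hfull.summable.comp_injective (fun a b hab => by omega)
  obtain ⟨b, hb⟩ := hoddsummable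
  have hcomb := heven.even_add_odd hb
  have hbval : b = π ^ 2 / 8 - π * θ / 4 := by
    have hu := hfull.unique hcomb
    linarith [hu]
  rw [hbval] at hb
  convert hb using 2 with k
  rw [hf]
  push_cast
  ring

/-- The KL coefficient. -/
noncomputable def klCoef (T : ℝ) (t : ℝ) (k : ℕ) : ℝ :=
  Real.sqrt (2 * T) * (Real.sin ((((k : ℝ) + 1) - 1 / 2) * π * t / T) / ((((k : ℝ) + 1) - 1 / 2) * π))


lemma hasSum_klCoef_mul {T : ℝ} (hT : 0 < T) {s t : ℝ} (hs : s ∈ Set.Icc (0:ℝ) T)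
    (ht : t ∈ Set.Icc (0:ℝ) T) :
    HasSum (fun k : ℕ => klCoef T s k * klCoef T t k) (min s t) := by
  have hπ := Real.pi_pos
  obtain ⟨hs0, hsT⟩ := hs
  obtain ⟨ht0, htT⟩ := ht
  set θm : ℝ := π * |s - t| / (2 * T) with hθm
  set θp : ℝ := π * (s + t) / (2 * T) with hθp
  have habs : |s - t| ≤ T := abs_sub_le_iff.2 ⟨by linarith, by linarith⟩
  have hm := hasSum_odd_cos (θ := θm) (by positivity) (by
    rw [hθm, div_le_iff₀ (by positivity)]
    nlinarith [abs_nonneg (s - t)])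
  have hp := hasSum_odd_cos (θ := θp) (by positivity) (by
    rw [hθp, div_le_iff₀ (by positivity)]
    nlinarith)
  have hdiff := (hm.sub hp).mul_left (4 * T / π ^ 2)
  have hfun : (fun k : ℕ => klCoef T s k * klCoef T t k)
      = fun k : ℕ => 4 * T / π ^ 2 *
        (Real.cos ((2 * (k:ℝ) + 1) * θm) / (2 * (k:ℝ) + 1) ^ 2
          - Real.cos ((2 * (k:ℝ) + 1) * θp) / (2 * (k:ℝ) + 1) ^ 2) := by
    funext k
    have hA : ∀ u : ℝ, (((k : ℝ) + 1) - 1 / 2) * π * u / T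
        = (2 * (k:ℝ) + 1) * (π * u / (2 * T)) := by
      intro u; field_simp; ring
    have hcos_m : Real.cos ((2 * (k:ℝ) + 1) * θm)
        = Real.cos ((2 * (k:ℝ) + 1) * (π * s / (2 * T)) - (2 * (k:ℝ) + 1) * (π * t / (2 * T))) := by
      rcases abs_choice (s - t) with h | h
      · rw [hθm, h]; congr 1; ring
      · rw [hθm, h, show (2 * (k:ℝ) + 1) * (π * -(s - t) / (2 * T))
            = -((2 * (k:ℝ) + 1) * (π * s / (2 * T)) - (2 * (k:ℝ) + 1) * (π * t / (2 * T))) by ring,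
          Real.cos_neg]
    have hcos_p : Real.cos ((2 * (k:ℝ) + 1) * θp)
        = Real.cos ((2 * (k:ℝ) + 1) * (π * s / (2 * T)) + (2 * (k:ℝ) + 1) * (π * t / (2 * T))) := by
      rw [hθp]; congr 1; ring
    rw [klCoef, klCoef, hA s, hA t, hcos_m, hcos_p]
    set a := (2 * (k:ℝ) + 1) * (π * s / (2 * T)) with ha
    set b := (2 * (k:ℝ) + 1) * (π * t / (2 * T)) with hb2
    have hq : (((k : ℝ) + 1) - 1 / 2) * π = (2 * (k:ℝ) + 1) * π / 2 := by ring
    have hss : Real.sqrt (2 * T) * Real.sqrt (2 * T) = 2 * T :=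
      Real.mul_self_sqrt (by positivity)
    have hk1 : (2 * (k:ℝ) + 1) ≠ 0 := by positivity
    have hc : Real.cos (a - b) - Real.cos (a + b) = 2 * (Real.sin a * Real.sin b) := by
      rw [Real.cos_sub, Real.cos_add]; ring
    rw [div_sub_div_same, hc, hq]
    have key : ∀ S sa sb K Tv : ℝ, K ≠ 0 → S * S = 2 * Tv →
        S * (sa / (K * π / 2)) * (S * (sb / (K * π / 2)))
          = 4 * Tv / π ^ 2 * (2 * (sa * sb) / K ^ 2) := by
      intro S sa sb K Tv hK hS
      field_simp
      linear_combination (2 * sa * sb) * hS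
    exact key _ _ _ _ _ hk1 hss
  rw [hfun]
  have hval : 4 * T / π ^ 2 * ((π ^ 2 / 8 - π * θm / 4) - (π ^ 2 / 8 - π * θp / 4)) = min s t := by
    rw [hθm, hθp]
    have hmin : min s t = (s + t - |s - t|) / 2 := by
      rcases le_total s t with h | h
      · rw [min_eq_left h, abs_of_nonpos (by linarith)]; ring
      · rw [min_eq_right h, abs_of_nonneg (by linarith)]; ring
    rw [hmin]
    field_simp
    ring
  rw [← hval]
  exact hdiff


/-- **L² convergence of the Karhunen–Loève expansion and its Brownian covariance.**
Let `T > 0` and let `(Z k)_{k≥1}` be independent real random variables in `L²`, each with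
mean `0` and variance `1` (here `Z k` denotes the `(k+1)`-st variable, `k : ℕ`).  For
`t ∈ [0, T]` the partial sums
`W_t^{(N)} = √(2T) Σ_{k=1}^N Z_k sin((k − 1/2)πt/T)/((k − 1/2)π)`
converge in `L²` to a limit `W t`, and `E[W s · W t] = min s t` for all `s, t ∈ [0, T]`. -/
theorem karhunen_loeve_L2_convergence_and_covariance
    {Ω : Type*} [MeasurableSpace Ω] (μ : Measure Ω) [IsProbabilityMeasure μ]
    (T : ℝ) (hT : 0 < T) (Z : ℕ → Ω → ℝ)
    (hZ_indep : ProbabilityTheory.iIndepFun Z μ)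
    (hZ_L2 : ∀ k, MemLp (Z k) 2 μ)
    (hZ_mean : ∀ k, ∫ ω, Z k ω ∂μ = 0)
    (hZ_var : ∀ k, ∫ ω, Z k ω ^ 2 ∂μ = 1) :
    ∃ W : ℝ → Ω → ℝ,
      (∀ t ∈ Set.Icc (0 : ℝ) T,
        MemLp (W t) 2 μ ∧
        Tendsto
          (fun N : ℕ =>
            eLpNorm
              (fun ω =>
                (Real.sqrt (2 * T) *
                  ∑ k ∈ Finset.range N,
                    Z k ω * Real.sin ((((k : ℝ) + 1) - 1 / 2) * Real.pi * t / T)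
                      / ((((k : ℝ) + 1) - 1 / 2) * Real.pi)) - W t ω)
              2 μ)
          atTop (𝓝 0)) ∧
      (∀ s ∈ Set.Icc (0 : ℝ) T, ∀ t ∈ Set.Icc (0 : ℝ) T,
        ∫ ω, W s ω * W t ω ∂μ = min s t) := by
  classical
  set ζ : ℕ → Lp ℝ 2 μ := fun k => (hZ_L2 k).toLp (Z k) with hζdef
  have hinner : ∀ j k, (inner ℝ (ζ j) (ζ k) : ℝ) = ∫ ω, Z j ω * Z k ω ∂μ := by
    intro j k
    rw [MeasureTheory.L2.inner_def]
    apply integral_congr_ae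
    filter_upwards [(hZ_L2 j).coeFn_toLp, (hZ_L2 k).coeFn_toLp] with ω h1 h2
    simp only [hζdef, RCLike.inner_apply, conj_trivial]
    rw [h1, h2, mul_comm]
  have horth : Orthonormal ℝ ζ := by
    rw [orthonormal_iff_ite]
    intro j k
    rw [hinner]
    by_cases h : j = k
    · subst h
      simp only [if_pos rfl]
      simp_rw [← sq]
      exact hZ_var j
    · simp only [if_neg h]
      have hind : ProbabilityTheory.IndepFun (Z j) (Z k) μ := hZ_indep.indepFun h
      have hmul := hind.integral_mul_eq_mul_integral (hZ_L2 j).aestronglyMeasurable (hZ_L2 k).aestronglyMeasurable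
      calc ∫ ω, Z j ω * Z k ω ∂μ = ∫ ω, (Z j * Z k) ω ∂μ := rfl
        _ = (∫ ω, Z j ω ∂μ) * ∫ ω, Z k ω ∂μ := hmul
        _ = 0 := by rw [hZ_mean j, zero_mul]
  -- summability of the series in L²
  have hsummable : ∀ t ∈ Set.Icc (0:ℝ) T, Summable (fun k => klCoef T t k • ζ k) := by
    intro t ht
    have he : (fun k => klCoef T t k • ζ k)
        = fun k => (LinearIsometry.toSpanSingleton ℝ _ (horth.1 k)) (klCoef T t k) :=
      funext fun k => (LinearIsometry.toSpanSingleton_apply _ _).symm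
    rw [he, horth.orthogonalFamily.summable_iff_norm_sq_summable]
    refine (hasSum_klCoef_mul hT ht ht).summable.congr fun k => ?_
    rw [Real.norm_eq_abs, sq_abs, sq]
  set Wlp : ℝ → Lp ℝ 2 μ := fun t => ∑' k, klCoef T t k • ζ k with hWlp
  refine ⟨fun t => ⇑(Wlp t), ?_, ?_⟩
  · intro t ht
    have hHS : HasSum (fun k => klCoef T t k • ζ k) (Wlp t) := (hsummable t ht).hasSum
    have htend := hHS.tendsto_sum_nat
    refine ⟨Lp.memLp _, ?_⟩
    -- partial sums in Lp agree a.e. with the explicit partial sums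
    have hcoe : ∀ N : ℕ, (⇑(∑ k ∈ Finset.range N, klCoef T t k • ζ k) : Ω → ℝ)
        =ᵐ[μ] fun ω => ∑ k ∈ Finset.range N, klCoef T t k * Z k ω := by
      intro N
      induction N with
      | zero => simp only [Finset.range_zero, Finset.sum_empty]; exact Lp.coeFn_zero _ _ _
      | succ n ih =>
        rw [Finset.sum_range_succ]
        filter_upwards [Lp.coeFn_add (∑ k ∈ Finset.range n, klCoef T t k • ζ k)
          (klCoef T t n • ζ n), ih, Lp.coeFn_smul (klCoef T t n) (ζ n),
          (hZ_L2 n).coeFn_toLp] with ω h1 h2 h3 h4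
        rw [h1, Pi.add_apply, h2, h3, Pi.smul_apply, Finset.sum_range_succ]
        simp only [hζdef]
        rw [h4, smul_eq_mul]
    have hae : ∀ N : ℕ,
        (fun ω =>
          (Real.sqrt (2 * T) *
            ∑ k ∈ Finset.range N,
              Z k ω * Real.sin ((((k : ℝ) + 1) - 1 / 2) * Real.pi * t / T)
                / ((((k : ℝ) + 1) - 1 / 2) * Real.pi)) - Wlp t ω)
        =ᵐ[μ] ⇑((∑ k ∈ Finset.range N, klCoef T t k • ζ k) - Wlp t) := by
      intro N
      filter_upwards [hcoe N, Lp.coeFn_sub (∑ k ∈ Finset.range N, klCoef T t k • ζ k) (Wlp t)]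
        with ω h1 h2
      rw [h2, Pi.sub_apply, h1]
      congr 1
      rw [Finset.mul_sum]
      exact Finset.sum_congr rfl fun k _ => by rw [klCoef]; ring
    have hkey : ∀ N : ℕ,
        eLpNorm
          (fun ω =>
            (Real.sqrt (2 * T) *
              ∑ k ∈ Finset.range N,
                Z k ω * Real.sin ((((k : ℝ) + 1) - 1 / 2) * Real.pi * t / T)
                  / ((((k : ℝ) + 1) - 1 / 2) * Real.pi)) - Wlp t ω) 2 μ
        = ENNReal.ofReal ‖(∑ k ∈ Finset.range N, klCoef T t k • ζ k) - Wlp t‖ := by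
      intro N
      rw [eLpNorm_congr_ae (hae N), Lp.norm_def,
        ENNReal.ofReal_toReal (Lp.eLpNorm_ne_top _)]
    simp_rw [hkey]
    have hnorm : Tendsto (fun N => ‖(∑ k ∈ Finset.range N, klCoef T t k • ζ k) - Wlp t‖)
        atTop (𝓝 0) := by
      rw [← tendsto_iff_norm_sub_tendsto_zero] at *
      exact htend
    simpa using ENNReal.tendsto_ofReal hnorm
  · intro s hs t ht
    have hHSs : HasSum (fun k => klCoef T s k • ζ k) (Wlp s) := (hsummable s hs).hasSum
    have hHSt : HasSum (fun k => klCoef T t k • ζ k) (Wlp t) := (hsummable t ht).hasSum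
    have h1 : ∫ ω, Wlp s ω * Wlp t ω ∂μ = (inner ℝ (Wlp s) (Wlp t) : ℝ) := by
      rw [MeasureTheory.L2.inner_def]
      refine integral_congr_ae (Filter.Eventually.of_forall fun ω => ?_)
      simp only [RCLike.inner_apply, conj_trivial]; exact mul_comm _ _
    rw [h1]
    have htends := hHSs.tendsto_sum_nat
    have htendt := hHSt.tendsto_sum_nat
    have hip : Tendsto (fun N => (inner ℝ (∑ k ∈ Finset.range N, klCoef T s k • ζ k)
        (∑ k ∈ Finset.range N, klCoef T t k • ζ k) : ℝ)) atTop (𝓝 (inner ℝ (Wlp s) (Wlp t))) :=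
      htends.inner htendt
    have hval : ∀ N, (inner ℝ (∑ k ∈ Finset.range N, klCoef T s k • ζ k)
        (∑ k ∈ Finset.range N, klCoef T t k • ζ k) : ℝ)
        = ∑ k ∈ Finset.range N, klCoef T s k * klCoef T t k := by
      intro N
      rw [horth.inner_sum]
      exact Finset.sum_congr rfl fun k _ => by rw [conj_trivial]
    simp_rw [hval] at hip
    exact tendsto_nhds_unique hip (hasSum_klCoef_mul hT hs ht).tendsto_sum_nat
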